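/- Let G be a countable groupoid equipped with a treeing, i.e. a Borel way of endowing each range fibre G^x with the structure of a connected graph via a symmetric generating set Q (with Q ∩ X = ∅) such that each fibre graph is a tree, and let d_x be the resulting length metric on G^x. Then ψ(γ) := d_{r(γ)}(r(γ), γ) is a real conditionally negative definite function on G: ψ vanishes on units, ψ(γ) = ψ(γ⁻¹), and for units x, elements γ₁,…,γ_n ∈ G^x and reals λ₁,…,λ_n with Σλ_i = 0, Σ_{i,j} λ_i λ_j ψ(γ_i⁻¹γ_j) ≤ 0. -/
import Mathlib


open MeasureTheory ENNReal Filter Topology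
open scoped ComplexOrder

/-- A discrete (countable) groupoid, given algebraically: a type `E` of arrows over a
unit space `X`, with range `r`, source `s`, a (total) partial multiplication `mul`
(only constrained on composable pairs), inversion, and countable source fibres. -/
structure CountableGroupoid where
  E : Type
  X : Type
  r : E → X
  s : E → X
  unit : X → E
  mul : E → E → E
  inv : E → E
  r_unit : ∀ x, r (unit x) = x
  s_unit : ∀ x, s (unit x) = x
  mul_assoc' : ∀ a b c, s a = r b → s b = r c → mul (mul a b) c = mul a (mul b c)
  r_mul : ∀ a b, s a = r b → r (mul a b) = r a
  s_mul : ∀ a b, s a = r b → s (mul a b) = s b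
  unit_mul : ∀ a, mul (unit (r a)) a = a
  mul_unit : ∀ a, mul a (unit (s a)) = a
  r_inv : ∀ a, r (inv a) = s a
  s_inv : ∀ a, s (inv a) = r a
  mul_inv : ∀ a, mul a (inv a) = unit (r a)
  inv_mul : ∀ a, mul (inv a) a = unit (s a)
  countable_fibers : ∀ x, {γ : E | s γ = x}.Countable

namespace CountableGroupoid

variable (G : CountableGroupoid)

/-- Sum of a nonnegative function over the source fibre `G_x = s⁻¹(x)`. -/
noncomputable def sFiberSum (f : G.E → ℝ≥0∞) (x : G.X) : ℝ≥0∞ :=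
  ∑' γ : {γ : G.E // G.s γ = x}, f γ.1

/-- Sum of a nonnegative function over the range fibre `G^x = r⁻¹(x)`. -/
noncomputable def rFiberSum (f : G.E → ℝ≥0∞) (x : G.X) : ℝ≥0∞ :=
  ∑' γ : {γ : G.E // G.r γ = x}, f γ.1

/-- The `I`-norm : `max (ess sup_x Σ_{r γ = x} |f γ|, ess sup_x Σ_{s γ = x} |f γ|)`. -/
noncomputable def Inorm [MeasurableSpace G.X] (μ : Measure G.X) (f : G.E → ℂ) : ℝ≥0∞ :=
  max (essSup (fun x => G.rFiberSum (fun γ => (‖f γ‖₊ : ℝ≥0∞)) x) μ)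
      (essSup (fun x => G.sFiberSum (fun γ => (‖f γ‖₊ : ℝ≥0∞)) x) μ)

/-- The factorizations `γ = γ₁ γ₂` of an arrow `γ`. -/
def Factorizations (γ : G.E) : Type :=
  {p : G.E × G.E // G.s p.1 = G.r p.2 ∧ G.mul p.1 p.2 = γ}

/-- Convolution product `(f*g)(γ) = Σ_{γ₁γ₂ = γ} f(γ₁) g(γ₂)`. -/
noncomputable def conv (f g : G.E → ℂ) (γ : G.E) : ℂ :=
  ∑' p : G.Factorizations γ, f p.1.1 * g p.1.2

/-- Involution `f^*(γ) = conj (f (γ⁻¹))`. -/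
noncomputable def starF (f : G.E → ℂ) (γ : G.E) : ℂ := (starRingEnd ℂ) (f (G.inv γ))

/-- The measure `ν` on `G` induced by `μ`: `ν(A) = ∫_X #(A ∩ s⁻¹ x) dμ(x)`. -/
noncomputable def nuSet [MeasurableSpace G.X] (μ : Measure G.X) (A : Set G.E) : ℝ≥0∞ :=
  ∫⁻ x, (∑' _γ : ↥(A ∩ {γ : G.E | G.s γ = x}), (1 : ℝ≥0∞)) ∂μ

/-- Positive definiteness of a function on a groupoid. -/
def IsPosDef (F : G.E → ℂ) : Prop :=
  ∀ (x : G.X) (n : ℕ) (γ : Fin n → G.E), (∀ i, G.r (γ i) = x) →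
    ∀ lam : Fin n → ℂ,
      0 ≤ ∑ i, ∑ j, lam i * (starRingEnd ℂ) (lam j) * F (G.mul (G.inv (γ i)) (γ j))

/-- Real conditionally negative definite functions on a groupoid. -/
def IsCondNegDef (ψ : G.E → ℝ) : Prop :=
  (∀ x, ψ (G.unit x) = 0) ∧ (∀ γ, ψ (G.inv γ) = ψ γ) ∧
  (∀ (x : G.X) (n : ℕ) (γ : Fin n → G.E), (∀ i, G.r (γ i) = x) →
    ∀ lam : Fin n → ℝ, (∑ i, lam i) = 0 →
      (∑ i, ∑ j, lam i * lam j * ψ (G.mul (G.inv (γ i)) (γ j))) ≤ 0)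

/-- `Q^n` : products of `n` elements of `Q` (with `Q^0` the units). -/
def Qpow (Q : Set G.E) : ℕ → Set G.E
  | 0 => Set.range G.unit
  | n+1 => {γ : G.E | ∃ a ∈ Q, ∃ b ∈ Qpow Q n, G.s a = G.r b ∧ γ = G.mul a b}

/-- A reduced composable chain of elements of `Q` (no backtracking). -/
def IsReducedChain (Q : Set G.E) : List G.E → Prop
  | [] => True
  | [a] => a ∈ Q
  | a :: b :: l => a ∈ Q ∧ G.s a = G.r b ∧ b ≠ G.inv a ∧ IsReducedChain Q (b :: l)

/-- A treeing: a symmetric generating set disjoint from the units such that each fibre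
graph is a tree (no nontrivial reduced loops). -/
def IsTreeing (Q : Set G.E) : Prop :=
  (∀ γ ∈ Q, G.inv γ ∈ Q) ∧
  (∀ x, G.unit x ∉ Q) ∧
  (∀ γ : G.E, ∃ n, γ ∈ G.Qpow Q n) ∧
  (∀ (a : G.E) (l : List G.E), G.IsReducedChain Q (a :: l) →
      List.foldl G.mul a l ≠ G.unit (G.r a))

/-- The length function `ψ(γ) = d_{r γ}(r γ, γ) = min {n | γ ∈ Q^n}`. -/
noncomputable def treeDist (Q : Set G.E) (γ : G.E) : ℝ :=
  ((sInf {n : ℕ | γ ∈ G.Qpow Q n} : ℕ) : ℝ)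

/-- The `A = L^∞(X)`-valued inner product `⟨ξ,η⟩_A(x) = Σ_{s γ = x} conj (ξ γ) η γ`. -/
noncomputable def innerA (ξ η : G.E → ℂ) (x : G.X) : ℂ :=
  ∑' γ : {γ : G.E // G.s γ = x}, (starRingEnd ℂ) (ξ γ.1) * η γ.1

/-- The Haagerup property for a countable measured groupoid. -/
def HaagerupProperty [MeasurableSpace G.X] (μ : Measure G.X) : Prop :=
  ∃ F : ℕ → G.E → ℂ,
    (∀ n, G.IsPosDef (F n)) ∧
    (∀ n, ∀ᵐ x ∂μ, F n (G.unit x) = 1) ∧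
    (∀ n, ∀ ε : ℝ, 0 < ε → G.nuSet μ {γ : G.E | ε < ‖F n γ‖} < ⊤) ∧
    G.nuSet μ {γ : G.E | ¬ Tendsto (fun n => F n γ) atTop (nhds (1 : ℂ))} = 0

end CountableGroupoid
namespace CountableGroupoid

variable (G : CountableGroupoid)

lemma inv_inv' (a : G.E) : G.inv (G.inv a) = a := by
  have h2 : G.mul (G.mul (G.inv (G.inv a)) (G.inv a)) a = a := by
    rw [G.inv_mul (G.inv a), G.s_inv]
    exact G.unit_mul a
  have h3 : G.mul (G.inv (G.inv a)) (G.mul (G.inv a) a) = G.inv (G.inv a) := by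
    rw [G.inv_mul a]
    have hs : G.s (G.inv (G.inv a)) = G.s a := by rw [G.s_inv, G.r_inv]
    conv_lhs => rw [← hs]
    exact G.mul_unit _
  conv_rhs => rw [← h2]
  rw [G.mul_assoc' _ _ _ (G.s_inv _) (G.s_inv _), h3]

lemma mul_left_cancel' (a b c : G.E) (h1 : G.s a = G.r b) (h2 : G.s a = G.r c)
    (h : G.mul a b = G.mul a c) : b = c := by
  have e : ∀ d, G.s a = G.r d → G.mul (G.inv a) (G.mul a d) = d := by
    intro d hd
    rw [← G.mul_assoc' _ _ _ (G.s_inv a) hd, G.inv_mul, hd, G.unit_mul]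
  rw [← e b h1, ← e c h2, h]

lemma mul_right_cancel' (a b c : G.E) (h1 : G.s b = G.r a) (h2 : G.s c = G.r a)
    (h : G.mul b a = G.mul c a) : b = c := by
  have e : ∀ d, G.s d = G.r a → G.mul (G.mul d a) (G.inv a) = d := by
    intro d hd
    rw [G.mul_assoc' _ _ _ hd (G.r_inv a).symm, G.mul_inv, ← hd, G.mul_unit]
  rw [← e b h1, ← e c h2, h]

lemma inv_mul_rev (a b : G.E) (h : G.s a = G.r b) :
    G.inv (G.mul a b) = G.mul (G.inv b) (G.inv a) := by
  have hs : G.s (G.mul a b) = G.s b := G.s_mul a b h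
  have hc : G.s (G.inv b) = G.r (G.inv a) := by rw [G.s_inv, G.r_inv, h]
  have key : G.mul (G.mul a b) (G.mul (G.inv b) (G.inv a)) = G.unit (G.r (G.mul a b)) := by
    rw [← G.mul_assoc' _ _ _ (by rw [hs, G.r_inv]) hc,
      G.mul_assoc' a b (G.inv b) h (G.r_inv b).symm, G.mul_inv, ← h, G.mul_unit, G.mul_inv,
      G.r_mul a b h]
  apply G.mul_left_cancel' (G.mul a b)
  · rw [G.r_inv]
  · rw [G.r_mul _ _ hc, G.r_inv, hs]
  · rw [G.mul_inv, key]

lemma inv_unit' (x : G.X) : G.inv (G.unit x) = G.unit x := by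
  apply G.mul_left_cancel' (G.unit x)
  · simp [G.s_unit, G.r_inv]
  · simp [G.s_unit, G.r_unit]
  · rw [G.mul_inv, G.r_unit]
    have h := G.mul_unit (G.unit x)
    rw [G.s_unit] at h
    rw [h]

lemma inv_injective' : Function.Injective G.inv := by
  intro a b h
  rw [← G.inv_inv' a, h, G.inv_inv']

end CountableGroupoid
namespace CountableGroupoid

variable (G : CountableGroupoid)

/-- Composable chain of elements of `Q` starting at the unit `x`. -/
def Word (Q : Set G.E) : G.X → List G.E → Prop
  | _, [] => True
  | x, a :: l => a ∈ Q ∧ G.r a = x ∧ Word Q (G.s a) l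

/-- The endpoint of a chain starting at `x`. -/
def wend : G.X → List G.E → G.X
  | x, [] => x
  | _, a :: l => wend (G.s a) l

/-- Product of a chain starting at `x`. -/
def chainProd (x : G.X) (l : List G.E) : G.E := l.foldl G.mul (G.unit x)

variable {G} {Q : Set G.E}

lemma word_nil (x : G.X) : G.Word Q x [] := trivial

lemma word_cons_iff {x : G.X} {a : G.E} {l : List G.E} :
    G.Word Q x (a :: l) ↔ a ∈ Q ∧ G.r a = x ∧ G.Word Q (G.s a) l := Iff.rfl

lemma chainProd_nil (x : G.X) : G.chainProd x [] = G.unit x := rfl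

@[simp] lemma wend_nil (x : G.X) : G.wend x [] = x := by simp [wend]

@[simp] lemma wend_cons (x : G.X) (a : G.E) (l : List G.E) :
    G.wend x (a :: l) = G.wend (G.s a) l := by simp [wend]

lemma chain_main : ∀ (l : List G.E) (x : G.X), G.Word Q x l →
    G.r (G.chainProd x l) = x ∧
    (∀ z, G.s z = x → l.foldl G.mul z = G.mul z (G.chainProd x l)) := by
  intro l
  induction l with
  | nil =>
    intro x _
    refine ⟨G.r_unit x, fun z hz => ?_⟩
    simp only [List.foldl, chainProd_nil]
    rw [← hz, G.mul_unit]
  | cons a l ih =>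
    intro x hw
    obtain ⟨haQ, har, hwl⟩ := hw
    obtain ⟨ihr, ihf⟩ := ih (G.s a) hwl
    have hcons : G.chainProd x (a :: l) = G.mul a (G.chainProd (G.s a) l) := by
      show (a :: l).foldl G.mul (G.unit x) = _
      have h0 : (a :: l).foldl G.mul (G.unit x) = l.foldl G.mul (G.mul (G.unit x) a) := rfl
      rw [h0, ← har, G.unit_mul]
      exact ihf a rfl
    constructor
    · rw [hcons, G.r_mul a _ ihr.symm]
      exact har
    · intro z hz
      have h0 : (a :: l).foldl G.mul z = l.foldl G.mul (G.mul z a) := rfl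
      have hza : G.s z = G.r a := by rw [hz, har]
      rw [h0, ihf (G.mul z a) (G.s_mul z a hza), hcons,
        G.mul_assoc' z a _ hza ihr.symm]

lemma r_chainProd {x : G.X} {l : List G.E} (h : G.Word Q x l) :
    G.r (G.chainProd x l) = x := (chain_main l x h).1

lemma chainProd_cons {x : G.X} {a : G.E} {l : List G.E} (h : G.Word Q x (a :: l)) :
    G.chainProd x (a :: l) = G.mul a (G.chainProd (G.s a) l) := by
  obtain ⟨haQ, har, hwl⟩ := h
  show (a :: l).foldl G.mul (G.unit x) = _
  have h0 : (a :: l).foldl G.mul (G.unit x) = l.foldl G.mul (G.mul (G.unit x) a) := rfl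
  rw [h0, ← har, G.unit_mul]
  exact (chain_main l (G.s a) hwl).2 a rfl

lemma s_chainProd {x : G.X} {l : List G.E} (h : G.Word Q x l) :
    G.s (G.chainProd x l) = G.wend x l := by
  induction l generalizing x with
  | nil => exact G.s_unit x
  | cons a l ih =>
    obtain ⟨haQ, har, hwl⟩ := h
    rw [chainProd_cons ⟨haQ, har, hwl⟩, wend_cons,
      G.s_mul a _ (r_chainProd hwl).symm]
    exact ih hwl

lemma chainProd_singleton {x : G.X} {a : G.E} (h : G.r a = x) :
    G.chainProd x [a] = a := by
  show G.mul (G.unit x) a = a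
  rw [← h, G.unit_mul]

lemma wend_append (x : G.X) (l m : List G.E) :
    G.wend x (l ++ m) = G.wend (G.wend x l) m := by
  induction l generalizing x with
  | nil => rfl
  | cons a l ih => rw [List.cons_append, wend_cons, wend_cons, ih]

lemma word_append {x : G.X} {l m : List G.E} (hl : G.Word Q x l)
    (hm : G.Word Q (G.wend x l) m) : G.Word Q x (l ++ m) := by
  induction l generalizing x with
  | nil => exact hm
  | cons a l ih =>
    obtain ⟨haQ, har, hwl⟩ := hl
    rw [wend_cons] at hm
    exact ⟨haQ, har, ih hwl hm⟩

lemma word_append_left {x : G.X} {l m : List G.E} (h : G.Word Q x (l ++ m)) :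
    G.Word Q x l := by
  induction l generalizing x with
  | nil => trivial
  | cons a l ih =>
    obtain ⟨haQ, har, hw⟩ := h
    exact ⟨haQ, har, ih hw⟩

lemma word_append_right {x : G.X} {l m : List G.E} (h : G.Word Q x (l ++ m)) :
    G.Word Q (G.wend x l) m := by
  induction l generalizing x with
  | nil => exact h
  | cons a l ih =>
    obtain ⟨haQ, har, hw⟩ := h
    rw [wend_cons]
    exact ih hw

lemma chainProd_append {x : G.X} {l m : List G.E} (hl : G.Word Q x l)
    (hm : G.Word Q (G.wend x l) m) :
    G.chainProd x (l ++ m) = G.mul (G.chainProd x l) (G.chainProd (G.wend x l) m) := by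
  show (l ++ m).foldl G.mul (G.unit x) = _
  rw [List.foldl_append]
  have hz : G.s (G.chainProd x l) = G.wend x l := s_chainProd hl
  have := (chain_main m (G.wend x l) hm).2 (G.chainProd x l) hz
  exact this

lemma word_mem {x : G.X} {l : List G.E} (h : G.Word Q x l) : ∀ a ∈ l, a ∈ Q := by
  induction l generalizing x with
  | nil => intro a ha; simp at ha
  | cons b l ih =>
    obtain ⟨hbQ, hbr, hw⟩ := h
    intro a ha
    rcases List.mem_cons.mp ha with h | h
    · exact h ▸ hbQ
    · exact ih hw a h

variable (G) in
/-- Reverse of the pointwise inverse of a chain. -/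
def revInv (l : List G.E) : List G.E := (l.map G.inv).reverse

lemma revInv_nil : G.revInv [] = [] := rfl

lemma revInv_cons (a : G.E) (l : List G.E) :
    G.revInv (a :: l) = G.revInv l ++ [G.inv a] := by
  simp [revInv]

lemma revInv_length (l : List G.E) : (G.revInv l).length = l.length := by
  simp [revInv]

lemma revInv_spec (hsym : ∀ γ ∈ Q, G.inv γ ∈ Q) {x : G.X} {l : List G.E}
    (h : G.Word Q x l) :
    G.Word Q (G.wend x l) (G.revInv l) ∧ G.wend (G.wend x l) (G.revInv l) = x ∧
      G.chainProd (G.wend x l) (G.revInv l) = G.inv (G.chainProd x l) := by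
  induction l generalizing x with
  | nil =>
    refine ⟨trivial, by rw [revInv_nil, wend_nil, wend_nil], ?_⟩
    rw [revInv_nil, wend_nil, chainProd_nil]
    exact (G.inv_unit' x).symm
  | cons a l ih =>
    obtain ⟨haQ, har, hwl⟩ := h
    obtain ⟨ihw, ihe, ihp⟩ := ih hwl
    have hy : G.wend x (a :: l) = G.wend (G.s a) l := wend_cons x a l
    have hwa : G.Word Q (G.s a) [G.inv a] := ⟨hsym a haQ, G.r_inv a, trivial⟩
    rw [hy, revInv_cons]
    have hwa' : G.Word Q (G.wend (G.wend (G.s a) l) (G.revInv l)) [G.inv a] := by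
      rw [ihe]; exact hwa
    refine ⟨word_append ihw hwa', ?_, ?_⟩
    · rw [wend_append, ihe, wend_cons, wend_nil, G.s_inv, har]
    · rw [chainProd_append ihw hwa', ihe, ihp, chainProd_singleton (G.r_inv a),
        chainProd_cons ⟨haQ, har, hwl⟩,
        G.inv_mul_rev a _ (r_chainProd hwl).symm]

end CountableGroupoid
namespace CountableGroupoid

variable {G : CountableGroupoid} {Q : Set G.E}

lemma red_nil : G.IsReducedChain Q [] := trivial

lemma red_singleton_iff {a : G.E} : G.IsReducedChain Q [a] ↔ a ∈ Q := Iff.rfl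

lemma red_cons_cons_iff {a b : G.E} {l : List G.E} :
    G.IsReducedChain Q (a :: b :: l) ↔
      a ∈ Q ∧ G.s a = G.r b ∧ b ≠ G.inv a ∧ G.IsReducedChain Q (b :: l) := Iff.rfl

lemma red_tail {a : G.E} {l : List G.E} (h : G.IsReducedChain Q (a :: l)) :
    G.IsReducedChain Q l := by
  cases l with
  | nil => trivial
  | cons b m => exact h.2.2.2

lemma red_head_mem {a : G.E} {l : List G.E} (h : G.IsReducedChain Q (a :: l)) : a ∈ Q := by
  cases l with
  | nil => exact h
  | cons b m => exact h.1

lemma red_append_right {l m : List G.E} (h : G.IsReducedChain Q (l ++ m)) :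
    G.IsReducedChain Q m := by
  induction l with
  | nil => exact h
  | cons a l ih => exact ih (red_tail h)

lemma red_append_left {l m : List G.E} (h : G.IsReducedChain Q (l ++ m)) :
    G.IsReducedChain Q l := by
  induction l with
  | nil => trivial
  | cons a l ih =>
    cases l with
    | nil => exact red_head_mem h
    | cons b l' =>
      obtain ⟨haQ, hab, hne, hrest⟩ := h
      exact ⟨haQ, hab, hne, ih hrest⟩

lemma red_append_mid {u v : List G.E} {c : G.E} (h1 : G.IsReducedChain Q (u ++ [c]))
    (h2 : G.IsReducedChain Q (c :: v)) : G.IsReducedChain Q (u ++ c :: v) := by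
  induction u with
  | nil => exact h2
  | cons a u ih =>
    cases u with
    | nil =>
      obtain ⟨haQ, hac, hne, _⟩ := h1
      exact ⟨haQ, hac, hne, h2⟩
    | cons b u' =>
      obtain ⟨haQ, hab, hne, hrest⟩ := h1
      exact ⟨haQ, hab, hne, ih hrest⟩

lemma red_revInv (hsym : ∀ γ ∈ Q, G.inv γ ∈ Q) {l : List G.E}
    (h : G.IsReducedChain Q l) : G.IsReducedChain Q (G.revInv l) := by
  induction l with
  | nil => trivial
  | cons a l ih =>
    cases l with
    | nil => exact hsym a h
    | cons b l' =>
      obtain ⟨haQ, hab, hne, hrest⟩ := h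
      have ih' := ih hrest
      rw [revInv_cons] at ih'
      have h2 : G.IsReducedChain Q [G.inv b, G.inv a] := by
        refine ⟨hsym b (red_head_mem hrest), ?_, ?_, hsym a haQ⟩
        · rw [G.s_inv, G.r_inv, hab]
        · rw [G.inv_inv']
          intro hc
          exact hne (by rw [hc])
      have := red_append_mid ih' h2
      rw [revInv_cons, revInv_cons, List.append_assoc]
      exact this

end CountableGroupoid
namespace CountableGroupoid

variable {G : CountableGroupoid} {Q : Set G.E}

open Classical

variable (G) in
/-- Cancellation-driven reduction of a chain. -/
noncomputable def redW : List G.E → List G.E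
  | [] => []
  | a :: l => match redW l with
    | [] => [a]
    | b :: m => if b = G.inv a then m else a :: b :: m

lemma redW_spec {x : G.X} {l : List G.E} (h : G.Word Q x l) :
    G.Word Q x (G.redW l) ∧ G.IsReducedChain Q (G.redW l) ∧
      G.chainProd x (G.redW l) = G.chainProd x l ∧ (G.redW l).length ≤ l.length := by
  induction l generalizing x with
  | nil => exact ⟨trivial, trivial, rfl, le_refl _⟩
  | cons a l ih =>
    obtain ⟨haQ, har, hwl⟩ := h
    obtain ⟨ihw, ihr, ihp, ihl⟩ := ih hwl
    have hcons : G.chainProd x (a :: l) = G.mul a (G.chainProd (G.s a) l) :=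
      chainProd_cons ⟨haQ, har, hwl⟩
    rcases hm : G.redW l with _ | ⟨b, m⟩
    · have hred : G.redW (a :: l) = [a] := by rw [redW, hm]
      rw [hred]
      refine ⟨⟨haQ, har, trivial⟩, haQ, ?_, by simp⟩
      rw [chainProd_singleton har, hcons, ← ihp, hm, chainProd_nil, G.mul_unit]
    · rw [hm] at ihw ihr ihp ihl
      obtain ⟨hbQ, hbr, hwm⟩ := ihw
      by_cases hba : b = G.inv a
      · have hred : G.redW (a :: l) = m := by
          rw [redW, hm]
          show (if b = G.inv a then m else a :: b :: m) = m
          rw [if_pos hba]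
        rw [hred]
        have hwm' : G.Word Q x m := by
          rw [hba] at hwm
          rwa [G.s_inv, har] at hwm
        have hP : G.r (G.chainProd x m) = x := r_chainProd hwm'
        refine ⟨hwm', red_tail ihr, ?_, by simp only [List.length_cons] at ihl ⊢; omega⟩
        rw [hcons, ← ihp, chainProd_cons ⟨hbQ, hbr, hwm⟩, hba]
        have hPm : G.chainProd (G.s (G.inv a)) m = G.chainProd x m := by
          rw [G.s_inv, har]
        rw [hPm, ← G.mul_assoc' a (G.inv a) _ (G.r_inv a).symm (by rw [G.s_inv, har, hP]),
          G.mul_inv, har]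
        have hu := G.unit_mul (G.chainProd x m)
        rw [hP] at hu
        exact hu.symm
      · have hred : G.redW (a :: l) = a :: b :: m := by
          rw [redW, hm]
          show (if b = G.inv a then m else a :: b :: m) = a :: b :: m
          rw [if_neg hba]
        rw [hred]
        refine ⟨⟨haQ, har, hbQ, hbr, hwm⟩, ⟨haQ, by rw [hbr], hba, ihr⟩, ?_,
          by simp only [List.length_cons] at ihl ⊢; omega⟩
        rw [hcons, ← ihp,
          chainProd_cons (show G.Word Q x (a :: b :: m) from ⟨haQ, har, hbQ, hbr, hwm⟩),
          chainProd_cons (show G.Word Q (G.s a) (b :: m) from ⟨hbQ, hbr, hwm⟩)]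

end CountableGroupoid
namespace CountableGroupoid

variable {G : CountableGroupoid} {Q : Set G.E}

lemma prod_ne_unit
    (htree : ∀ (a : G.E) (l : List G.E), G.IsReducedChain Q (a :: l) →
      List.foldl G.mul a l ≠ G.unit (G.r a))
    {x : G.X} {l : List G.E} (hw : G.Word Q x l) (hr : G.IsReducedChain Q l)
    (hne : l ≠ []) : G.chainProd x l ≠ G.unit x := by
  cases l with
  | nil => exact absurd rfl hne
  | cons a l' =>
    obtain ⟨haQ, har, hwl⟩ := hw
    have h1 : G.chainProd x (a :: l') = l'.foldl G.mul a := by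
      show (a :: l').foldl G.mul (G.unit x) = _
      have h0 : (a :: l').foldl G.mul (G.unit x) = l'.foldl G.mul (G.mul (G.unit x) a) := rfl
      rw [h0, ← har, G.unit_mul]
    rw [h1, ← har]
    exact htree a l' hr

lemma revInv_concat (v : List G.E) (b : G.E) :
    G.revInv (v ++ [b]) = G.inv b :: G.revInv v := by
  simp [revInv]

lemma wend_concat {x : G.X} (u : List G.E) (a : G.E) :
    G.wend x (u ++ [a]) = G.s a := by
  rw [wend_append, wend_cons, wend_nil]

lemma word_unique (hsym : ∀ γ ∈ Q, G.inv γ ∈ Q)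
    (htree : ∀ (a : G.E) (l : List G.E), G.IsReducedChain Q (a :: l) →
      List.foldl G.mul a l ≠ G.unit (G.r a)) :
    ∀ (n : ℕ) (l m : List G.E) (x : G.X), l.length + m.length ≤ n →
      G.Word Q x l → G.Word Q x m → G.IsReducedChain Q l → G.IsReducedChain Q m →
      G.chainProd x l = G.chainProd x m → l = m := by
  intro n
  induction n with
  | zero =>
    intro l m x hlen _ _ _ _ _
    have hl : l = [] := List.eq_nil_of_length_eq_zero (by omega)
    have hm : m = [] := List.eq_nil_of_length_eq_zero (by omega)
    rw [hl, hm]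
  | succ n ih =>
    intro l m x hlen hwl hwm hrl hrm hp
    rcases List.eq_nil_or_concat l with rfl | ⟨u, a, rfl⟩
    · rcases List.eq_nil_or_concat m with rfl | ⟨v, b, rfl⟩
      · rfl
      · simp only [List.concat_eq_append] at hwm hrm hp
        exact absurd (hp.symm.trans (chainProd_nil x))
          (prod_ne_unit htree hwm hrm (by simp))
    · rcases List.eq_nil_or_concat m with rfl | ⟨v, b, rfl⟩
      · simp only [List.concat_eq_append] at hwl hrl hp
        exact absurd (hp.trans (chainProd_nil x))
          (prod_ne_unit htree hwl hrl (by simp))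
      · simp only [List.concat_eq_append] at hwl hwm hrl hrm hp hlen ⊢
        have hwu : G.Word Q x u := word_append_left hwl
        have hwv : G.Word Q x v := word_append_left hwm
        have hwa : G.Word Q (G.wend x u) [a] := word_append_right hwl
        have hwb : G.Word Q (G.wend x v) [b] := word_append_right hwm
        have hra : G.r a = G.wend x u := hwa.2.1
        have hrb : G.r b = G.wend x v := hwb.2.1
        have hPl : G.chainProd x (u ++ [a]) = G.mul (G.chainProd x u) a := by
          rw [chainProd_append hwu hwa, chainProd_singleton hra]
        have hPm : G.chainProd x (v ++ [b]) = G.mul (G.chainProd x v) b := by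
          rw [chainProd_append hwv hwb, chainProd_singleton hrb]
        by_cases hab : a = b
        · subst hab
          have hPuv : G.chainProd x u = G.chainProd x v :=
            G.mul_right_cancel' a _ _ (by rw [s_chainProd hwu]; exact hra.symm)
              (by rw [s_chainProd hwv]; exact hrb.symm) (by rw [← hPl, hp, hPm])
          have huv : u = v :=
            ih u v x (by simp only [List.length_append, List.length_cons,
              List.length_nil] at hlen ⊢; omega) hwu hwv
              (red_append_left hrl) (red_append_left hrm) hPuv
          rw [huv]
        · exfalso
          have hsl : G.wend x (u ++ [a]) = G.wend x (v ++ [b]) := by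
            rw [← s_chainProd hwl, ← s_chainProd hwm, hp]
          obtain ⟨hwRI, hweRI, hpRI⟩ := revInv_spec hsym hwm
          rw [← hsl] at hwRI hweRI hpRI
          have hwL : G.Word Q x ((u ++ [a]) ++ G.revInv (v ++ [b])) :=
            word_append hwl hwRI
          have hsa : G.s a = G.s b := by
            rw [← wend_concat u a, ← wend_concat v b, hsl]
          have hrdRI : G.IsReducedChain Q (G.inv b :: G.revInv v) := by
            rw [← revInv_concat]
            exact red_revInv hsym hrm
          have hmid : G.IsReducedChain Q (a :: G.inv b :: G.revInv v) := by
            refine ⟨?_, ?_, ?_, hrdRI⟩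
            · have := red_append_right hrl
              exact red_head_mem this
            · rw [G.r_inv, hsa]
            · intro hc
              exact hab (G.inv_injective' hc.symm)
          have hrdL : G.IsReducedChain Q ((u ++ [a]) ++ G.revInv (v ++ [b])) := by
            rw [revInv_concat, List.append_assoc]
            exact red_append_mid hrl hmid
          have hprodL : G.chainProd x ((u ++ [a]) ++ G.revInv (v ++ [b])) = G.unit x := by
            rw [chainProd_append hwl hwRI, hpRI, hp, G.mul_inv,
              r_chainProd hwm]
          exact prod_ne_unit htree hwL hrdL (by simp) hprodL

end CountableGroupoid
namespace CountableGroupoid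

variable {G : CountableGroupoid} {Q : Set G.E}

lemma qpow_iff {n : ℕ} {γ : G.E} : γ ∈ G.Qpow Q n ↔
    ∃ l, G.Word Q (G.r γ) l ∧ G.chainProd (G.r γ) l = γ ∧ l.length = n := by
  induction n generalizing γ with
  | zero =>
    constructor
    · rintro ⟨x, rfl⟩
      exact ⟨[], trivial, by rw [chainProd_nil, G.r_unit], rfl⟩
    · rintro ⟨l, hw, hp, hlen⟩
      rw [List.eq_nil_of_length_eq_zero hlen] at hp
      exact ⟨G.r γ, (chainProd_nil _).symm.trans hp⟩
  | succ n ih =>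
    constructor
    · rintro ⟨a, haQ, b, hbQ, hsr, rfl⟩
      obtain ⟨l, hw, hp, hlen⟩ := ih.mp hbQ
      have hr : G.r (G.mul a b) = G.r a := G.r_mul a b hsr
      have hwl' : G.Word Q (G.s a) l := by rw [hsr]; exact hw
      refine ⟨a :: l, ⟨haQ, hr.symm, hwl'⟩, ?_, by simp [hlen]⟩
      rw [chainProd_cons ⟨haQ, hr.symm, hwl'⟩]
      congr 1
      rw [hsr]
      exact hp
    · rintro ⟨l, hw, hp, hlen⟩
      rcases l with _ | ⟨a, l'⟩
      · simp at hlen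
      · obtain ⟨haQ, har, hw'⟩ := hw
        have hb : G.chainProd (G.s a) l' ∈ G.Qpow Q n := by
          apply ih.mpr
          exact ⟨l', by rwa [r_chainProd hw'], by rw [r_chainProd hw'], by simpa using hlen⟩
        refine ⟨a, haQ, G.chainProd (G.s a) l', hb, (r_chainProd hw').symm, ?_⟩
        rw [← hp, chainProd_cons ⟨haQ, har, hw'⟩]

end CountableGroupoid
namespace CountableGroupoid

variable {G : CountableGroupoid} {Q : Set G.E}

lemma exists_red_word (hQ : G.IsTreeing Q) (γ : G.E) :
    ∃ l, G.Word Q (G.r γ) l ∧ G.IsReducedChain Q l ∧ G.chainProd (G.r γ) l = γ := by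
  obtain ⟨n, hn⟩ := hQ.2.2.1 γ
  obtain ⟨l, hw, hp, _⟩ := qpow_iff.mp hn
  obtain ⟨hw', hr', hp', _⟩ := redW_spec hw
  exact ⟨G.redW l, hw', hr', hp'.trans hp⟩

variable (G) in
noncomputable def wordOf (hQ : G.IsTreeing Q) (γ : G.E) : List G.E :=
  (exists_red_word hQ γ).choose

lemma wordOf_spec (hQ : G.IsTreeing Q) (γ : G.E) :
    G.Word Q (G.r γ) (G.wordOf hQ γ) ∧ G.IsReducedChain Q (G.wordOf hQ γ) ∧
      G.chainProd (G.r γ) (G.wordOf hQ γ) = γ :=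
  (exists_red_word hQ γ).choose_spec

lemma wordOf_unique (hQ : G.IsTreeing Q) {γ : G.E} {l : List G.E}
    (hw : G.Word Q (G.r γ) l) (hr : G.IsReducedChain Q l)
    (hp : G.chainProd (G.r γ) l = γ) : l = G.wordOf hQ γ := by
  obtain ⟨hw', hr', hp'⟩ := wordOf_spec hQ γ
  exact word_unique hQ.1 hQ.2.2.2 (l.length + (G.wordOf hQ γ).length) l _ (G.r γ)
    le_rfl hw hw' hr hr' (hp.trans hp'.symm)

lemma treeDist_eq_length (hQ : G.IsTreeing Q) (γ : G.E) :
    G.treeDist Q γ = ((G.wordOf hQ γ).length : ℝ) := by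
  obtain ⟨hw, hr, hp⟩ := wordOf_spec hQ γ
  have hmem : (G.wordOf hQ γ).length ∈ {n : ℕ | γ ∈ G.Qpow Q n} :=
    qpow_iff.mpr ⟨_, hw, hp, rfl⟩
  have heq : sInf {n : ℕ | γ ∈ G.Qpow Q n} = (G.wordOf hQ γ).length := by
    apply le_antisymm (Nat.sInf_le hmem)
    apply le_csInf ⟨_, hmem⟩
    intro n hn
    obtain ⟨l, hwn, hpn, hlen⟩ := qpow_iff.mp hn
    obtain ⟨hw', hr', hp', hlen'⟩ := redW_spec hwn
    have := wordOf_unique hQ hw' hr' (hp'.trans hpn)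
    rw [← this]
    omega
  rw [treeDist, heq]

lemma wordOf_unit (hQ : G.IsTreeing Q) (x : G.X) : G.wordOf hQ (G.unit x) = [] :=
  (wordOf_unique hQ (word_nil _) red_nil (by rw [chainProd_nil, G.r_unit])).symm

lemma wordOf_inv (hQ : G.IsTreeing Q) (γ : G.E) :
    G.wordOf hQ (G.inv γ) = G.revInv (G.wordOf hQ γ) := by
  obtain ⟨hw, hr, hp⟩ := wordOf_spec hQ γ
  obtain ⟨hw', he', hp'⟩ := revInv_spec hQ.1 hw
  have hwe : G.wend (G.r γ) (G.wordOf hQ γ) = G.r (G.inv γ) := by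
    rw [← s_chainProd hw, hp, G.r_inv]
  rw [hwe] at hw' hp'
  rw [hp] at hp'
  exact (wordOf_unique hQ hw' (red_revInv hQ.1 hr) hp').symm

end CountableGroupoid
namespace CountableGroupoid

variable {G : CountableGroupoid} {Q : Set G.E}

open Classical

variable (G) in
/-- Longest common prefix of two lists. -/
noncomputable def cp : List G.E → List G.E → List G.E
  | a :: u, b :: v => if a = b then a :: cp u v else []
  | _, _ => []

lemma cp_nil_left (v : List G.E) : G.cp [] v = [] := by cases v <;> rfl

lemma cp_nil_right (u : List G.E) : G.cp u [] = [] := by cases u <;> rfl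

lemma cp_cons (a b : G.E) (u v : List G.E) :
    G.cp (a :: u) (b :: v) = if a = b then a :: G.cp u v else [] := by
  rw [cp]

lemma cp_prefix_left : ∀ u v : List G.E, G.cp u v <+: u := by
  intro u
  induction u with
  | nil => intro v; rw [cp_nil_left]
  | cons a u ih =>
    intro v
    cases v with
    | nil => rw [cp_nil_right]; exact List.nil_prefix
    | cons b v =>
      rw [cp_cons]
      by_cases h : a = b
      · rw [if_pos h]
        obtain ⟨t, ht⟩ := ih v
        exact ⟨t, by rw [List.cons_append, ht]⟩
      · rw [if_neg h]; exact List.nil_prefix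

lemma cp_prefix_right : ∀ u v : List G.E, G.cp u v <+: v := by
  intro u
  induction u with
  | nil => intro v; rw [cp_nil_left]; exact List.nil_prefix
  | cons a u ih =>
    intro v
    cases v with
    | nil => rw [cp_nil_right]
    | cons b v =>
      rw [cp_cons]
      by_cases h : a = b
      · rw [if_pos h]
        obtain ⟨t, ht⟩ := ih v
        exact ⟨t, by rw [List.cons_append, ht, h]⟩
      · rw [if_neg h]; exact List.nil_prefix

lemma cp_head_ne : ∀ (u v : List G.E) {a b : G.E} {u' v' : List G.E},
    u.drop (G.cp u v).length = a :: u' → v.drop (G.cp u v).length = b :: v' → a ≠ b := by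
  intro u
  induction u with
  | nil =>
    intro v a b u' v' h1 _
    rw [cp_nil_left] at h1
    simp at h1
  | cons c u ih =>
    intro v a b u' v' h1 h2
    cases v with
    | nil =>
      rw [cp_nil_right] at h2
      simp at h2
    | cons d v =>
      rw [cp_cons] at h1 h2
      by_cases h : c = d
      · rw [if_pos h] at h1 h2
        simp only [List.length_cons, List.drop_succ_cons] at h1 h2
        exact ih v h1 h2
      · rw [if_neg h] at h1 h2
        simp only [List.length_nil, List.drop_zero] at h1 h2
        injection h1 with h1a h1b
        injection h2 with h2a h2b
        rw [← h1a, ← h2a]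
        exact h

lemma eq_cp_append_drop (u v : List G.E) :
    u = G.cp u v ++ u.drop (G.cp u v).length := by
  obtain ⟨t, ht⟩ := cp_prefix_left (G := G) u v
  calc u = G.cp u v ++ t := ht.symm
    _ = G.cp u v ++ (G.cp u v ++ t).drop (G.cp u v).length := by rw [List.drop_left]
    _ = G.cp u v ++ u.drop (G.cp u v).length := by rw [ht]

end CountableGroupoid
namespace CountableGroupoid

variable {G : CountableGroupoid} {Q : Set G.E}

lemma eq_cp_append_drop' (u v : List G.E) :
    v = G.cp u v ++ v.drop (G.cp u v).length := by
  obtain ⟨t, ht⟩ := cp_prefix_right (G := G) u v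
  calc v = G.cp u v ++ t := ht.symm
    _ = G.cp u v ++ (G.cp u v ++ t).drop (G.cp u v).length := by rw [List.drop_left]
    _ = G.cp u v ++ v.drop (G.cp u v).length := by rw [ht]

lemma key_core (hQ : G.IsTreeing Q) {x : G.X} {w u' v' : List G.E}
    (hww : G.Word Q x w) (hwu' : G.Word Q (G.wend x w) u') (hwv' : G.Word Q (G.wend x w) v')
    (hru : G.IsReducedChain Q (w ++ u')) (hrv : G.IsReducedChain Q (w ++ v'))
    (hne : ∀ (a b : G.E) (u'' v'' : List G.E), u' = a :: u'' → v' = b :: v'' → a ≠ b) :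
    G.wordOf hQ (G.mul (G.inv (G.chainProd x (w ++ u'))) (G.chainProd x (w ++ v')))
      = G.revInv u' ++ v' := by
  set y := G.wend x w with hy
  set pw := G.chainProd x w with hpw
  set pu := G.chainProd y u' with hpu
  set pv := G.chainProd y v' with hpv
  have hwl : G.Word Q x (w ++ u') := word_append hww hwu'
  have hwm : G.Word Q x (w ++ v') := word_append hww hwv'
  have hgam : G.chainProd x (w ++ u') = G.mul pw pu := chainProd_append hww hwu'
  have hdel : G.chainProd x (w ++ v') = G.mul pw pv := chainProd_append hww hwv'
  set γ := G.chainProd x (w ++ u') with hγdef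
  set δ := G.chainProd x (w ++ v') with hδdef
  have hspw : G.s pw = y := s_chainProd hww
  have hrpu : G.r pu = y := r_chainProd hwu'
  have hrpv : G.r pv = y := r_chainProd hwv'
  have hcomp : G.s pw = G.r pu := by rw [hspw, hrpu]
  have hcomp' : G.s pw = G.r pv := by rw [hspw, hrpv]
  have hrγ : G.r γ = x := r_chainProd hwl
  have hrδ : G.r δ = x := r_chainProd hwm
  have hsγ : G.s γ = G.s pu := by rw [hgam, G.s_mul _ _ hcomp]
  have hsγ' : G.s γ = G.wend y u' := by rw [hsγ, hpu]; exact s_chainProd hwu'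
  -- the target arrow
  have hcompε : G.s (G.inv γ) = G.r δ := by rw [G.s_inv, hrγ, hrδ]
  have hrε : G.r (G.mul (G.inv γ) δ) = G.s γ := by
    rw [G.r_mul _ _ hcompε, G.r_inv]
  obtain ⟨hwRI, hweRI, hpRI⟩ := revInv_spec hQ.1 hwu'
  rw [← hsγ'] at hwRI hweRI hpRI
  -- Word
  have hword : G.Word Q (G.r (G.mul (G.inv γ) δ)) (G.revInv u' ++ v') := by
    rw [hrε]
    apply word_append hwRI
    rw [hweRI]
    exact hwv'
  -- Reduced
  have hred : G.IsReducedChain Q (G.revInv u' ++ v') := by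
    rcases u' with _ | ⟨a, u''⟩
    · exact red_append_right hrv
    · rcases v' with _ | ⟨b, v''⟩
      · rw [List.append_nil]
        exact red_revInv hQ.1 (red_append_right hru)
      · obtain ⟨haQ, hra, hwu''⟩ := hwu'
        obtain ⟨hbQ, hrb, hwv''⟩ := hwv'
        have hmid : G.IsReducedChain Q (G.inv a :: b :: v'') := by
          refine ⟨hQ.1 a haQ, ?_, ?_, red_append_right hrv⟩
          · rw [G.s_inv, hra, hrb]
          · rw [G.inv_inv']
            exact (hne a b u'' v'' rfl rfl).symm
        have h1 : G.IsReducedChain Q (G.revInv u'' ++ [G.inv a]) := by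
          rw [← revInv_cons]
          exact red_revInv hQ.1 (red_append_right hru)
        have := red_append_mid h1 hmid
        rw [revInv_cons, List.append_assoc]
        exact this
  -- Product
  have hprod : G.chainProd (G.r (G.mul (G.inv γ) δ)) (G.revInv u' ++ v')
      = G.mul (G.inv γ) δ := by
    rw [hrε]
    have hwv'2 : G.Word Q (G.wend (G.s γ) (G.revInv u')) v' := by rw [hweRI]; exact hwv'
    rw [chainProd_append hwRI hwv'2, hpRI]
    have hpv2 : G.chainProd (G.wend (G.s γ) (G.revInv u')) v' = pv := by rw [hweRI]
    rw [hpv2]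
    -- now show inv pu * pv = inv γ * δ
    have hinvγ : G.inv γ = G.mul (G.inv pu) (G.inv pw) := by
      rw [hgam, G.inv_mul_rev _ _ hcomp]
    rw [hinvγ, hdel]
    have h1 : G.s (G.inv pu) = G.r (G.inv pw) := by rw [G.s_inv, G.r_inv, hrpu, hspw]
    have h2 : G.s (G.inv pw) = G.r (G.mul pw pv) := by
      rw [G.s_inv, G.r_mul _ _ hcomp']
    have hu3 : G.mul (G.unit y) pv = pv := by
      have h4 := G.unit_mul pv
      rwa [hrpv] at h4
    rw [G.mul_assoc' _ _ _ h1 h2,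
      ← G.mul_assoc' (G.inv pw) pw pv (G.s_inv pw) hcomp',
      G.inv_mul, hspw, hu3, ← hpu]
  exact (wordOf_unique hQ hword hred hprod).symm

end CountableGroupoid
namespace CountableGroupoid

variable {G : CountableGroupoid} {Q : Set G.E}

open Classical

lemma cp_common : ∀ (p u v : List G.E), p <+: u → p <+: v → p <+: G.cp u v := by
  intro p
  induction p with
  | nil => intro u v _ _; exact List.nil_prefix
  | cons c p ih =>
    intro u v hu hv
    obtain ⟨t, ht⟩ := hu
    obtain ⟨t', ht'⟩ := hv
    subst ht ht'
    rw [List.cons_append, List.cons_append, cp_cons, if_pos rfl]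
    obtain ⟨s, hs⟩ := ih (p ++ t) (p ++ t') ⟨t, rfl⟩ ⟨t', rfl⟩
    exact ⟨s, by rw [List.cons_append, hs]⟩

lemma key_dist (hQ : G.IsTreeing Q) {x : G.X} {γ δ : G.E} (hγ : G.r γ = x)
    (hδ : G.r δ = x) :
    (G.wordOf hQ (G.mul (G.inv γ) δ)).length
      + 2 * (G.cp (G.wordOf hQ γ) (G.wordOf hQ δ)).length
      = (G.wordOf hQ γ).length + (G.wordOf hQ δ).length := by
  obtain ⟨hwu, hru, hpu⟩ := wordOf_spec hQ γ
  obtain ⟨hwv, hrv, hpv⟩ := wordOf_spec hQ δ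
  rw [hγ] at hwu hpu
  rw [hδ] at hwv hpv
  have hu := eq_cp_append_drop (G := G) (G.wordOf hQ γ) (G.wordOf hQ δ)
  have hv := eq_cp_append_drop' (G := G) (G.wordOf hQ γ) (G.wordOf hQ δ)
  have hwu2 : G.Word Q x (G.cp (G.wordOf hQ γ) (G.wordOf hQ δ)
      ++ (G.wordOf hQ γ).drop (G.cp (G.wordOf hQ γ) (G.wordOf hQ δ)).length) := by
    rw [← hu]; exact hwu
  have hwv2 : G.Word Q x (G.cp (G.wordOf hQ γ) (G.wordOf hQ δ)
      ++ (G.wordOf hQ δ).drop (G.cp (G.wordOf hQ γ) (G.wordOf hQ δ)).length) := by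
    rw [← hv]; exact hwv
  have hru2 := hu ▸ hru
  have hrv2 := hv ▸ hrv
  have hpu2 : G.chainProd x (G.cp (G.wordOf hQ γ) (G.wordOf hQ δ)
      ++ (G.wordOf hQ γ).drop (G.cp (G.wordOf hQ γ) (G.wordOf hQ δ)).length) = γ := by
    rw [← hu]; exact hpu
  have hpv2 : G.chainProd x (G.cp (G.wordOf hQ γ) (G.wordOf hQ δ)
      ++ (G.wordOf hQ δ).drop (G.cp (G.wordOf hQ γ) (G.wordOf hQ δ)).length) = δ := by
    rw [← hv]; exact hpv
  have hkey := key_core hQ (word_append_left hwu2) (word_append_right hwu2)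
    (word_append_right hwv2) hru2 hrv2
    (fun a b u'' v'' h1 h2 => cp_head_ne (G.wordOf hQ γ) (G.wordOf hQ δ) h1 h2)
  rw [hpu2, hpv2] at hkey
  rw [hkey]
  have hlu := congrArg List.length hu
  have hlv := congrArg List.length hv
  simp only [List.length_append, List.length_drop] at hlu hlv ⊢
  rw [revInv_length]
  simp only [List.length_drop]
  omega

variable (G) in
/-- The finset of nonempty prefixes of a list. -/
noncomputable def pf (l : List G.E) : Finset (List G.E) :=
  (Finset.range l.length).image (fun i => l.take (i + 1))

lemma pf_card (l : List G.E) : (G.pf l).card = l.length := by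
  rw [pf, Finset.card_image_of_injOn, Finset.card_range]
  intro i hi j hj hij
  simp only [Finset.coe_range, Set.mem_Iio] at hi hj
  have h1 := congrArg List.length hij
  simp only [List.length_take] at h1
  omega

lemma pf_mem {p l : List G.E} : p ∈ G.pf l ↔ p ≠ [] ∧ p <+: l := by
  constructor
  · intro hp
    obtain ⟨i, hi, rfl⟩ := Finset.mem_image.mp hp
    simp only [Finset.mem_range] at hi
    constructor
    · apply List.ne_nil_of_length_pos
      rw [List.length_take]
      omega
    · exact List.take_prefix _ _
  · rintro ⟨hne, hpre⟩
    have h1 : 1 ≤ p.length := List.length_pos_iff.mpr hne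
    have h2 : p.length ≤ l.length := hpre.length_le
    apply Finset.mem_image.mpr
    refine ⟨p.length - 1, Finset.mem_range.mpr (by omega), ?_⟩
    have h3 : p.length - 1 + 1 = p.length := by omega
    rw [h3, ← List.prefix_iff_eq_take.mp hpre]

lemma pf_inter (u v : List G.E) : G.pf u ∩ G.pf v = G.pf (G.cp u v) := by
  ext p
  simp only [Finset.mem_inter, pf_mem]
  constructor
  · rintro ⟨⟨hne, hpu⟩, ⟨_, hpv⟩⟩
    exact ⟨hne, cp_common p u v hpu hpv⟩
  · rintro ⟨hne, hp⟩
    exact ⟨⟨hne, hp.trans (cp_prefix_left u v)⟩, ⟨hne, hp.trans (cp_prefix_right u v)⟩⟩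

end CountableGroupoid
namespace CountableGroupoid

variable {G : CountableGroupoid} {Q : Set G.E}

open Classical

lemma dist_card (hQ : G.IsTreeing Q) {x : G.X} {γ δ : G.E} (hγ : G.r γ = x)
    (hδ : G.r δ = x) :
    G.treeDist Q (G.mul (G.inv γ) δ)
      = ((G.pf (G.wordOf hQ γ)).card : ℝ) + ((G.pf (G.wordOf hQ δ)).card : ℝ)
        - 2 * (((G.pf (G.wordOf hQ γ) ∩ G.pf (G.wordOf hQ δ)).card : ℝ)) := by
  rw [treeDist_eq_length hQ, pf_inter, pf_card, pf_card, pf_card]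
  have h := key_dist hQ hγ hδ
  have h2 := congrArg (fun k : ℕ => (k : ℝ)) h
  push_cast at h2
  linarith

lemma quad_ineq (G : CountableGroupoid) {n : ℕ} (P : Fin n → Finset (List G.E))
    (lam : Fin n → ℝ) (hsum : ∑ i, lam i = 0) :
    ∑ i, ∑ j, lam i * lam j *
      (((P i).card : ℝ) + ((P j).card : ℝ) - 2 * (((P i ∩ P j).card : ℝ))) ≤ 0 := by
  classical
  set U : Finset (List G.E) := Finset.univ.biUnion (fun i => P i) with hU
  have hsub : ∀ i, P i ⊆ U := fun i => Finset.subset_biUnion_of_mem _ (Finset.mem_univ i)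
  set f : Fin n → List G.E → ℝ := fun i e => if e ∈ P i then lam i else 0 with hf
  have hterm : ∀ i j, lam i * lam j * ((P i ∩ P j).card : ℝ)
      = ∑ e ∈ U, f i e * f j e := by
    intro i j
    have hsubij : P i ∩ P j ⊆ U := Finset.inter_subset_left.trans (hsub i)
    have hcard : ((P i ∩ P j).card : ℝ)
        = ∑ e ∈ U, (if e ∈ P i then (1 : ℝ) else 0) * (if e ∈ P j then 1 else 0) := by
      have e1 : ∀ e, (if e ∈ P i then (1 : ℝ) else 0) * (if e ∈ P j then 1 else 0)
          = if e ∈ P i ∩ P j then (1 : ℝ) else 0 := by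
        intro e
        by_cases h1 : e ∈ P i <;> by_cases h2 : e ∈ P j <;>
          simp [h1, h2, Finset.mem_inter]
      rw [Finset.sum_congr rfl (fun e _ => e1 e), Finset.sum_ite_mem,
        Finset.inter_eq_right.mpr hsubij]
      simp
    rw [hcard, Finset.mul_sum]
    refine Finset.sum_congr rfl fun e _ => ?_
    by_cases h1 : e ∈ P i <;> by_cases h2 : e ∈ P j <;> simp [hf, h1, h2]
  have hT3 : ∑ i, ∑ j, lam i * lam j * ((P i ∩ P j).card : ℝ)
      = ∑ e ∈ U, (∑ i, f i e) ^ 2 := by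
    calc ∑ i, ∑ j, lam i * lam j * ((P i ∩ P j).card : ℝ)
        = ∑ i, ∑ j, ∑ e ∈ U, f i e * f j e :=
          Finset.sum_congr rfl fun i _ => Finset.sum_congr rfl fun j _ => hterm i j
      _ = ∑ i, ∑ e ∈ U, ∑ j, f i e * f j e :=
          Finset.sum_congr rfl fun i _ => Finset.sum_comm
      _ = ∑ e ∈ U, ∑ i, ∑ j, f i e * f j e := Finset.sum_comm
      _ = ∑ e ∈ U, (∑ i, f i e) * (∑ j, f j e) := by
          refine Finset.sum_congr rfl fun e _ => ?_
          rw [Finset.sum_mul_sum]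
      _ = ∑ e ∈ U, (∑ i, f i e) ^ 2 := by
          refine Finset.sum_congr rfl fun e _ => ?_
          rw [sq]
  have hT1 : ∑ i, ∑ j, lam i * lam j * ((P i).card : ℝ) = 0 := by
    have h1 : ∀ i : Fin n, ∑ j : Fin n, lam i * lam j * ((P i).card : ℝ)
        = (lam i * ((P i).card : ℝ)) * ∑ j, lam j := by
      intro i
      rw [Finset.mul_sum]
      exact Finset.sum_congr rfl fun j _ => by ring
    rw [Finset.sum_congr rfl fun i _ => h1 i]
    simp [hsum]
  have hT2 : ∑ i, ∑ j, lam i * lam j * ((P j).card : ℝ) = 0 := by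
    have h1 : ∀ i : Fin n, ∑ j : Fin n, lam i * lam j * ((P j).card : ℝ)
        = lam i * ∑ j, lam j * ((P j).card : ℝ) := by
      intro i
      rw [Finset.mul_sum]
      exact Finset.sum_congr rfl fun j _ => by ring
    rw [Finset.sum_congr rfl fun i _ => h1 i, ← Finset.sum_mul, hsum, zero_mul]
  have hexp : ∑ i, ∑ j, lam i * lam j *
      (((P i).card : ℝ) + ((P j).card : ℝ) - 2 * (((P i ∩ P j).card : ℝ)))
      = (∑ i, ∑ j, lam i * lam j * ((P i).card : ℝ))
        + (∑ i, ∑ j, lam i * lam j * ((P j).card : ℝ))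
        - 2 * ∑ i, ∑ j, lam i * lam j * ((P i ∩ P j).card : ℝ) := by
    rw [Finset.mul_sum, ← Finset.sum_add_distrib, ← Finset.sum_sub_distrib]
    refine Finset.sum_congr rfl fun i _ => ?_
    rw [Finset.mul_sum, ← Finset.sum_add_distrib, ← Finset.sum_sub_distrib]
    refine Finset.sum_congr rfl fun j _ => by ring
  rw [hexp, hT1, hT2, hT3]
  have hpos : (0 : ℝ) ≤ ∑ e ∈ U, (∑ i, f i e) ^ 2 :=
    Finset.sum_nonneg fun e _ => sq_nonneg _
  linarith

end CountableGroupoid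

/-- the length function `ψ(γ) = d_{r γ}(r γ, γ)` of a treeing is a real
conditionally negative definite function on the groupoid. -/
theorem treeing_length_condNegDef (G : CountableGroupoid) (Q : Set G.E)
    (hQ : G.IsTreeing Q) :
    G.IsCondNegDef (G.treeDist Q) := by
  classical
  refine ⟨?_, ?_, ?_⟩
  · intro x
    rw [CountableGroupoid.treeDist_eq_length hQ, CountableGroupoid.wordOf_unit hQ]
    simp
  · intro γ
    rw [CountableGroupoid.treeDist_eq_length hQ, CountableGroupoid.treeDist_eq_length hQ,
      CountableGroupoid.wordOf_inv hQ, CountableGroupoid.revInv_length]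
  · intro x n γ hγ lam hsum
    calc ∑ i, ∑ j, lam i * lam j * G.treeDist Q (G.mul (G.inv (γ i)) (γ j))
        = ∑ i, ∑ j, lam i * lam j *
          (((G.pf (G.wordOf hQ (γ i))).card : ℝ) + ((G.pf (G.wordOf hQ (γ j))).card : ℝ)
            - 2 * (((G.pf (G.wordOf hQ (γ i)) ∩ G.pf (G.wordOf hQ (γ j))).card : ℝ))) :=
          Finset.sum_congr rfl fun i _ => Finset.sum_congr rfl fun j _ => by
            rw [CountableGroupoid.dist_card hQ (hγ i) (hγ j)]
      _ ≤ 0 := G.quad_ineq (fun i => G.pf (G.wordOf hQ (γ i))) lam hsum
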